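/- Let B_0,…,B_N be complex d×d matrices whose characteristic polynomial factors as F(μ) = μ^e g(μ) with e ∈ ℕ and g a polynomial with g(0) ≠ 0, and let λ = (λ_1,…,λ_m) be a stable non-resonant vector of eigenvalues for B_0,…,B_N, none of whose entries is zero. Suppose 0 < μ ≤ min{|λ_1|^e, …, |λ_m|^e}. Then there exists a constant C > 0 such that for every multi-index α ∈ ℕ^m with |α| ≥ 2, the matrix T(λ^α) is invertible and μ^{|α|} ‖T(λ^α)⁻¹‖ ≤ C. -/

import Mathlib

open Finset

/-- `T(μ) = Σ_{i=0}^N μ^i B_i`. -/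
noncomputable def linT {d : ℕ} (N : ℕ) (B : ℕ → Matrix (Fin d) (Fin d) ℂ) (μ : ℂ) :
    Matrix (Fin d) (Fin d) ℂ :=
  ∑ i ∈ Finset.range (N + 1), μ ^ i • B i

/-- The characteristic polynomial `F(μ) = det T(μ)`. -/
noncomputable def charF {d : ℕ} (N : ℕ) (B : ℕ → Matrix (Fin d) (Fin d) ℂ) (μ : ℂ) : ℂ :=
  (linT N B μ).det

/-- `λ^α = λ₁^{α₁} ⋯ λ_m^{α_m}` for a multi-index `α ∈ ℕ^m`. -/
def mIdxPow {m : ℕ} (lam : Fin m → ℂ) (α : Fin m → ℕ) : ℂ :=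
  ∏ j, lam j ^ α j

/-- `|α| = α₁ + ⋯ + α_m`. -/
def mIdxSize {m : ℕ} (α : Fin m → ℕ) : ℕ :=
  ∑ j, α j

/-- `λ = (λ₁,…,λ_m)` is a stable non-resonant vector of eigenvalues for
`B_0,…,B_N` : each `|λ_j| < 1` with `F(λ_j) = 0`, and `F(λ^α) ≠ 0` for every
multi-index `α` with `|α| ≥ 2`. -/
def StableNonResonant {d m : ℕ} (N : ℕ) (B : ℕ → Matrix (Fin d) (Fin d) ℂ)
    (lam : Fin m → ℂ) : Prop :=
  (∀ j, ‖lam j‖ < 1 ∧ charF N B (lam j) = 0) ∧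
  ∀ α : Fin m → ℕ, 2 ≤ mIdxSize α → charF N B (mIdxPow lam α) ≠ 0

/-- Operator norm of a complex matrix, acting by `mulVec` on `ℂ^d` with the
sup norm. -/
noncomputable def matOpNorm {d : ℕ} (M : Matrix (Fin d) (Fin d) ℂ) : ℝ :=
  ‖LinearMap.toContinuousLinearMap (Matrix.mulVecLin M)‖


/-!
`T(z)⁻¹ = det T(z)⁻¹ • adj T(z)`, and `adj T(z)` is bounded on the closed unit disc, where all
`λ^α` lie. Since `det T(λ^α) = (λ^α)^e g(λ^α)` and `μ^{|α|} ≤ |λ^α|^e`, it remains to bound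
`|g(λ^α)|` from below. As `|α| → ∞` we have `λ^α → 0` and `g(λ^α) → g(0) ≠ 0`, so only finitely
many `α` can bring `|g(λ^α)|` below `|g(0)|/2`, and non-resonance makes each of them nonzero.
-/

open Filter Topology

lemma matOpNorm_eq {d : ℕ} (M : Matrix (Fin d) (Fin d) ℂ) :
    matOpNorm M = ‖(Matrix.toLin'.trans LinearMap.toContinuousLinearMap) M‖ :=
  rfl

lemma matOpNorm_nonneg {d : ℕ} (M : Matrix (Fin d) (Fin d) ℂ) : 0 ≤ matOpNorm M :=
  norm_nonneg _

lemma continuous_matOpNorm {d : ℕ} : Continuous (matOpNorm : Matrix (Fin d) (Fin d) ℂ → ℝ) :=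
  (LinearMap.continuous_of_finiteDimensional
    (Matrix.toLin'.trans LinearMap.toContinuousLinearMap :
      Matrix (Fin d) (Fin d) ℂ ≃ₗ[ℂ] ((Fin d → ℂ) →L[ℂ] (Fin d → ℂ))).toLinearMap).norm

lemma matOpNorm_smul {d : ℕ} (c : ℂ) (M : Matrix (Fin d) (Fin d) ℂ) :
    matOpNorm (c • M) = ‖c‖ * matOpNorm M := by
  rw [matOpNorm_eq, matOpNorm_eq, map_smul, norm_smul]

lemma matOpNorm_inv {d : ℕ} (M : Matrix (Fin d) (Fin d) ℂ) :
    matOpNorm M⁻¹ = ‖M.det‖⁻¹ * matOpNorm M.adjugate := by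
  rw [Matrix.inv_def, Ring.inverse_eq_inv', matOpNorm_smul, norm_inv]

lemma continuous_linT {d : ℕ} (N : ℕ) (B : ℕ → Matrix (Fin d) (Fin d) ℂ) :
    Continuous (linT N B) :=
  continuous_finsetSum _ fun i _ => (continuous_pow i).smul continuous_const

lemma mul_matOpNorm_inv_le {d e : ℕ} {M : Matrix (Fin d) (Fin d) ℂ} {w v : ℂ} {c A ε : ℝ}
    (hdet : M.det = w ^ e * v) (hdet0 : M.det ≠ 0) (hc : c ≤ ‖w‖ ^ e)
    (hA : matOpNorm M.adjugate ≤ A) (hε : 0 < ε) (hv : ε ≤ ‖v‖) :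
    c * matOpNorm M⁻¹ ≤ A / ε := by
  have hw : ‖w‖ ^ e ≠ 0 := by
    rw [← norm_pow]
    exact norm_ne_zero_iff.2 (left_ne_zero_of_mul (hdet ▸ hdet0))
  have hA0 : 0 ≤ A := (matOpNorm_nonneg _).trans hA
  rw [matOpNorm_inv, hdet, norm_mul, norm_pow]
  calc c * ((‖w‖ ^ e * ‖v‖)⁻¹ * matOpNorm M.adjugate)
      ≤ ‖w‖ ^ e * ((‖w‖ ^ e * ‖v‖)⁻¹ * A) := by
        gcongr
        exact mul_nonneg (by positivity) (matOpNorm_nonneg _)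
    _ = A / ‖v‖ := by field_simp
    _ ≤ A / ε := by gcongr

lemma exists_pos_bound_matOpNorm_adjugate_linT {d : ℕ} (N : ℕ)
    (B : ℕ → Matrix (Fin d) (Fin d) ℂ) :
    ∃ A > 0, ∀ z : ℂ, ‖z‖ ≤ 1 → matOpNorm (linT N B z).adjugate ≤ A := by
  obtain ⟨A, hA⟩ := (isCompact_closedBall (0 : ℂ) 1).exists_bound_of_continuousOn
    (continuous_matOpNorm.comp (continuous_linT N B).matrix_adjugate).continuousOn
  refine ⟨max A 1, by positivity, fun z hz => ?_⟩
  calc matOpNorm (linT N B z).adjugate ≤ ‖matOpNorm (linT N B z).adjugate‖ := le_abs_self _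
    _ ≤ A := hA z (by simpa using hz)
    _ ≤ max A 1 := le_max_left _ _

section MultiIndex

variable {m : ℕ}

lemma norm_mIdxPow (lam : Fin m → ℂ) (α : Fin m → ℕ) :
    ‖mIdxPow lam α‖ = ∏ j, ‖lam j‖ ^ α j := by
  simp only [mIdxPow, norm_prod, norm_pow]

lemma mIdxPow_pow (lam : Fin m → ℂ) (α : Fin m → ℕ) (e : ℕ) :
    mIdxPow lam α ^ e = mIdxPow (fun j => lam j ^ e) α := by
  simp only [mIdxPow, ← prod_pow, ← pow_mul, mul_comm]

lemma norm_mIdxPow_le {lam : Fin m → ℂ} {c : ℝ} (h : ∀ j, ‖lam j‖ ≤ c) (α : Fin m → ℕ) :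
    ‖mIdxPow lam α‖ ≤ c ^ mIdxSize α := by
  rw [norm_mIdxPow, mIdxSize, ← prod_pow_eq_pow_sum]
  exact prod_le_prod (fun j _ => by positivity) fun j _ => pow_le_pow_left₀ (norm_nonneg _) (h j) _

lemma pow_mIdxSize_le_norm_mIdxPow {lam : Fin m → ℂ} {c : ℝ} (hc : 0 ≤ c)
    (h : ∀ j, c ≤ ‖lam j‖) (α : Fin m → ℕ) :
    c ^ mIdxSize α ≤ ‖mIdxPow lam α‖ := by
  rw [norm_mIdxPow, mIdxSize, ← prod_pow_eq_pow_sum]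
  exact prod_le_prod (fun j _ => by positivity) fun j _ => pow_le_pow_left₀ hc (h j) _

lemma tendsto_mIdxSize_cofinite_atTop :
    Tendsto (mIdxSize : (Fin m → ℕ) → ℕ) cofinite atTop := by
  refine tendsto_atTop.2 fun n => eventually_cofinite.2 ?_
  refine (Fintype.piFinset fun _ => range n).finite_toSet.subset fun α hα => ?_
  simp only [Set.mem_ofPred_eq, not_le] at hα
  simpa using fun j => (single_le_sum (fun i _ => Nat.zero_le (α i)) (mem_univ j)).trans_lt hα

lemma tendsto_mIdxPow_cofinite {lam : Fin m → ℂ} (h : ∀ j, ‖lam j‖ < 1) :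
    Tendsto (mIdxPow lam) cofinite (𝓝 0) := by
  have hle : ∀ {a : ℝ}, a < 1 → ∀ᶠ ρ in 𝓝[<] (1 : ℝ), a ≤ ρ := fun ha =>
    mem_of_superset (Ioo_mem_nhdsLT ha) fun ρ hρ => hρ.1.le
  obtain ⟨ρ, hρ0, hlam, hρ1⟩ := ((hle zero_lt_one).and
    ((eventually_all.2 fun j => hle (h j)).and eventually_mem_nhdsWithin)).exists
  exact squeeze_zero_norm (norm_mIdxPow_le hlam)
    ((tendsto_pow_atTop_nhds_zero_of_lt_one hρ0 hρ1).comp tendsto_mIdxSize_cofinite_atTop)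

end MultiIndex

lemma exists_pos_le_norm_of_tendsto_cofinite {ι E : Type*} [NormedAddCommGroup E] {f : ι → E}
    {a : E} (hf : Tendsto f cofinite (𝓝 a)) (ha : a ≠ 0) {s : Set ι} (hs : ∀ i ∈ s, f i ≠ 0) :
    ∃ ε > 0, ∀ i ∈ s, ε ≤ ‖f i‖ := by
  have ha' : 0 < ‖a‖ := norm_pos_iff.2 ha
  have hnear : {i | ¬ ‖a‖ / 2 < ‖f i‖}.Finite :=
    eventually_cofinite.1 (hf.norm.eventually (lt_mem_nhds (half_lt_self ha')))
  have hsmall : ∀ {b : ℝ}, 0 < b → ∀ᶠ ε in 𝓝[>] (0 : ℝ), ε < b := fun hb =>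
    (eventually_lt_nhds hb).filter_mono nhdsWithin_le_nhds
  have hε : ∀ᶠ ε in 𝓝[>] (0 : ℝ),
      0 < ε ∧ ε < ‖a‖ / 2 ∧ ∀ i ∈ {i | ¬ ‖a‖ / 2 < ‖f i‖} ∩ s, ε < ‖f i‖ :=
    eventually_mem_nhdsWithin.and <| (hsmall (half_pos ha')).and <|
      (hnear.inter_of_left s).eventually_all.2 fun i hi => hsmall (norm_pos_iff.2 (hs i hi.2))
  obtain ⟨ε, hε0, hεa, hεf⟩ := hε.exists
  refine ⟨ε, hε0, fun i hi => ?_⟩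
  by_cases hfar : ‖a‖ / 2 < ‖f i‖
  · exact (hεa.trans hfar).le
  · exact (hεf i ⟨hfar, hi⟩).le

theorem singular_dilation_bound_general {d m N : ℕ}
    (B : ℕ → Matrix (Fin d) (Fin d) ℂ)
    (e : ℕ) (g : Polynomial ℂ) (hg0 : g.eval 0 ≠ 0)
    (hfac : ∀ z : ℂ, charF N B z = z ^ e * g.eval z)
    (lam : Fin m → ℂ) (hlam : StableNonResonant N B lam)
    (μ : ℝ) (hμ : 0 < μ) (hμle : ∀ j, μ ≤ ‖lam j‖ ^ e) :
    ∃ C : ℝ, 0 < C ∧ ∀ α : Fin m → ℕ, 2 ≤ mIdxSize α →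
      IsUnit (linT N B (mIdxPow lam α)) ∧
      μ ^ (mIdxSize α) * matOpNorm (linT N B (mIdxPow lam α))⁻¹ ≤ C := by
  obtain ⟨A, hA0, hA⟩ := exists_pos_bound_matOpNorm_adjugate_linT N B
  have hg : ∀ α ∈ {α | 2 ≤ mIdxSize α}, g.eval (mIdxPow lam α) ≠ 0 := fun α hα h =>
    hlam.2 α hα (by rw [hfac, h, mul_zero])
  obtain ⟨ε, hε, hgε⟩ := exists_pos_le_norm_of_tendsto_cofinite
    ((g.continuous.tendsto 0).comp (tendsto_mIdxPow_cofinite fun j => (hlam.1 j).1)) hg0 hg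
  refine ⟨A / ε, div_pos hA0 hε, fun α hα =>
    ⟨(Matrix.isUnit_iff_isUnit_det _).2 (hlam.2 α hα).isUnit, ?_⟩⟩
  refine mul_matOpNorm_inv_le (hfac _) (hlam.2 α hα) ?_ (hA _ ?_) hε (hgε α hα)
  · calc μ ^ mIdxSize α ≤ ‖mIdxPow (fun j => lam j ^ e) α‖ :=
          pow_mIdxSize_le_norm_mIdxPow hμ.le (fun j => (hμle j).trans_eq (norm_pow _ _).symm) α
      _ = ‖mIdxPow lam α‖ ^ e := by rw [← mIdxPow_pow, norm_pow]
  · simpa using norm_mIdxPow_le (fun j => (hlam.1 j).1.le) α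

/-- Singular case, dilation bound: if `F(μ) = μ^e g(μ)` with
`g(0) ≠ 0`, `λ` a stable non-resonant vector of eigenvalues with nonzero
entries, and `0 < μ ≤ min_j |λ_j|^e`, then there is `C > 0` such that
`T(λ^α)` is invertible and `μ^{|α|} ‖T(λ^α)⁻¹‖ ≤ C` whenever `|α| ≥ 2`. -/
theorem singular_dilation_bound {d m N : ℕ}
    (B : ℕ → Matrix (Fin d) (Fin d) ℂ)
    (e : ℕ) (g : Polynomial ℂ) (hg0 : g.eval 0 ≠ 0)
    (hfac : ∀ z : ℂ, charF N B z = z ^ e * g.eval z)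
    (lam : Fin m → ℂ) (hlam : StableNonResonant N B lam)
    (hne : ∀ j, lam j ≠ 0)
    (μ : ℝ) (hμ : 0 < μ) (hμle : ∀ j, μ ≤ ‖lam j‖ ^ e) :
    ∃ C : ℝ, 0 < C ∧ ∀ α : Fin m → ℕ, 2 ≤ mIdxSize α →
      IsUnit (linT N B (mIdxPow lam α)) ∧
      μ ^ (mIdxSize α) * matOpNorm (linT N B (mIdxPow lam α))⁻¹ ≤ C :=
  singular_dilation_bound_general B e g hg0 hfac lam hlam μ hμ hμle
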